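/- arXiv:2212.07512 — 5 statements merged into one kernel-verified Lean document; each statement's English description precedes it below -/
import Mathlib

section
/- For a traceless complex 2×2 matrix A, the following are equivalent: (1) A is normal (i.e., AA* = A*A); (2) tr(AA*) = 2|det(A)|; (3) AA* = |det(A)|·I. -/
/-!
Write `t = tr(AAᴴ)` and `[A, Aᴴ] = AAᴴ - AᴴA`. For traceless `2 × 2` matrices `X, Y`, polarizing
Cayley–Hamilton (`X² = -det X • 1`) gives `XY + YX = tr(XY) • 1`, and hence
`det (XY - YX) = 4 det X det Y - tr(XY)²`. With `X = A`, `Y = Aᴴ` this reads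
`t² - 4|det A|² = -det [A, Aᴴ]`. The commutator is Hermitian and traceless, so its determinant is
`-(|c₀₀|² + |c₀₁|²)`, which vanishes only when the commutator does; as `t ≥ 0`, this gives
`t = 2|det A| ↔ A` normal. For normal `A` the anticommutator identity becomes `2AAᴴ = t • 1`.
-/

open Matrix

open scoped ComplexOrder

namespace Matrix

section CommRing

variable {R : Type*} [CommRing R] {X Y : Matrix (Fin 2) (Fin 2) R}

theorem eq_neg_of_trace_eq_zero_fin_two (hX : trace X = 0) : X 1 1 = -X 0 0 := by
  rw [trace_fin_two] at hX
  linear_combination hX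

theorem mul_add_mul_eq_trace_mul_smul_one_of_trace_eq_zero (hX : trace X = 0)
    (hY : trace Y = 0) : X * Y + Y * X = trace (X * Y) • (1 : Matrix (Fin 2) (Fin 2) R) := by
  ext i j
  fin_cases i <;> fin_cases j <;>
    simp [mul_apply, trace_fin_two, eq_neg_of_trace_eq_zero_fin_two hX,
      eq_neg_of_trace_eq_zero_fin_two hY] <;> ring

theorem det_commutator_of_trace_eq_zero (hX : trace X = 0) (hY : trace Y = 0) :
    det (X * Y - Y * X) = 4 * det X * det Y - trace (X * Y) ^ 2 := by
  simp [det_fin_two, mul_apply, trace_fin_two, eq_neg_of_trace_eq_zero_fin_two hX,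
    eq_neg_of_trace_eq_zero_fin_two hY]
  ring

end CommRing

theorem IsHermitian.eq_zero_of_det_eq_zero_of_trace_eq_zero {C : Matrix (Fin 2) (Fin 2) ℂ}
    (hC : C.IsHermitian) (htr : trace C = 0) (hdet : det C = 0) : C = 0 := by
  have h10 : C 1 0 = starRingEnd ℂ (C 0 1) := by simpa using (hC.apply 1 0).symm
  have h00 : starRingEnd ℂ (C 0 0) = C 0 0 := by simpa using hC.apply 0 0
  have hsum : Complex.normSq (C 0 0) + Complex.normSq (C 0 1) = 0 := by
    rw [det_fin_two, eq_neg_of_trace_eq_zero_fin_two htr, h10] at hdet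
    apply Complex.ofReal_injective
    push_cast
    rw [← Complex.mul_conj, ← Complex.mul_conj, h00]
    linear_combination -hdet
  obtain ⟨h00', h01⟩ :=
    (add_eq_zero_iff_of_nonneg (Complex.normSq_nonneg _) (Complex.normSq_nonneg _)).1 hsum
  rw [Complex.normSq_eq_zero] at h00' h01
  ext i j
  fin_cases i <;> fin_cases j <;> simp [h00', h01, h10, eq_neg_of_trace_eq_zero_fin_two htr]

variable {A : Matrix (Fin 2) (Fin 2) ℂ}

theorem trace_mul_conjTranspose_eq_ofReal_re : trace (A * Aᴴ) = ((trace (A * Aᴴ)).re : ℂ) :=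
  Complex.eq_re_of_ofReal_le (r := 0) <| by
    exact_mod_cast (posSemidef_self_mul_conjTranspose A).trace_nonneg

theorem trace_mul_conjTranspose_sq_sub_eq_neg_det_commutator (hA : trace A = 0) :
    (((trace (A * Aᴴ)).re ^ 2 - (2 * ‖det A‖) ^ 2 : ℝ) : ℂ) = -det (A * Aᴴ - Aᴴ * A) := by
  have hAH : trace Aᴴ = 0 := by simp [hA]
  rw [det_commutator_of_trace_eq_zero hA hAH, det_conjTranspose, Complex.star_def, mul_assoc,
    Complex.mul_conj']
  push_cast
  rw [← trace_mul_conjTranspose_eq_ofReal_re]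
  ring

theorem mul_conjTranspose_comm_iff_trace_eq_two_norm_det (hA : trace A = 0) :
    A * Aᴴ = Aᴴ * A ↔ trace (A * Aᴴ) = ((2 * ‖det A‖ : ℝ) : ℂ) := by
  have hC : (A * Aᴴ - Aᴴ * A).IsHermitian :=
    (isHermitian_mul_conjTranspose_self A).sub (isHermitian_conjTranspose_mul_self A)
  have hCtr : trace (A * Aᴴ - Aᴴ * A) = 0 := by rw [trace_sub, trace_mul_comm, sub_self]
  have ht : 0 ≤ (trace (A * Aᴴ)).re := by
    simpa using Complex.re_le_re (posSemidef_self_mul_conjTranspose A).trace_nonneg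
  calc A * Aᴴ = Aᴴ * A
      ↔ det (A * Aᴴ - Aᴴ * A) = 0 :=
        ⟨fun h => by rw [h, sub_self, det_zero],
          fun h => sub_eq_zero.1 (hC.eq_zero_of_det_eq_zero_of_trace_eq_zero hCtr h)⟩
    _ ↔ (trace (A * Aᴴ)).re ^ 2 = (2 * ‖det A‖) ^ 2 := by
        rw [← neg_eq_zero, ← trace_mul_conjTranspose_sq_sub_eq_neg_det_commutator hA,
          Complex.ofReal_eq_zero, sub_eq_zero]
    _ ↔ (trace (A * Aᴴ)).re = 2 * ‖det A‖ := sq_eq_sq₀ ht (by positivity)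
    _ ↔ trace (A * Aᴴ) = ((2 * ‖det A‖ : ℝ) : ℂ) := by
        rw [trace_mul_conjTranspose_eq_ofReal_re, Complex.ofReal_inj, Complex.ofReal_re]

end Matrix

/-- For a traceless complex 2×2 matrix `A`, the following are equivalent:
(1) `A` is normal, i.e. `AAᴴ = AᴴA`;
(2) `tr(AAᴴ) = 2|det A|`;
(3) `AAᴴ = |det A|·I`. -/
theorem sl2_normal_tfae (A : Matrix (Fin 2) (Fin 2) ℂ)
    (hA : Matrix.trace A = 0) :
    (A * Aᴴ = Aᴴ * A ↔ Matrix.trace (A * Aᴴ) = ((2 * ‖Matrix.det A‖ : ℝ) : ℂ)) ∧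
    (A * Aᴴ = Aᴴ * A ↔
      A * Aᴴ = ((‖Matrix.det A‖ : ℂ)) • (1 : Matrix (Fin 2) (Fin 2) ℂ)) := by
  have h12 := mul_conjTranspose_comm_iff_trace_eq_two_norm_det hA
  refine ⟨h12, fun h => ?_, fun h => h12.2 ?_⟩
  · have hAH : trace Aᴴ = 0 := by simp [hA]
    have h2 := mul_add_mul_eq_trace_mul_smul_one_of_trace_eq_zero hA hAH
    rw [← h, h12.1 h, ← two_smul ℂ, Complex.ofReal_mul, mul_smul] at h2
    exact smul_right_injective (Matrix (Fin 2) (Fin 2) ℂ) (two_ne_zero' ℂ) h2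
  · rw [h, trace_smul, trace_one]
    simp [mul_comm]
end

section
/- For every traceless complex 2×2 matrix A, one has tr([A,[A,A*]]·A* + A·[[A,A*],A*]) = 4(4|det(A)|² - tr(AA*)²) ≤ 0, with equality if and only if A is normal; in particular the flow of W(A) = (1/4)[A,[A,A*]] does not increase the Frobenius norm. -/
open Matrix
open scoped ComplexOrder

/-!
Writing `K = [A, Aᴴ]`, cyclicity of the trace turns the left-hand side into `-2 tr(K Kᴴ)`,
i.e. minus twice the squared Frobenius norm of the Hermitian matrix `K`; so it is `≤ 0`, with
equality iff `K = 0`. For traceless `2 × 2` matrices the characteristic equations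
`A² = -det(A) I` and `(AAᴴ)² = tr(AAᴴ) AAᴴ - |det A|² I` evaluate
`tr(K²) = 2 tr(AAᴴ)² - 8 |det A|²`.
-/

namespace Matrix

variable {n R : Type*} [Fintype n] [CommRing R]

theorem trace_commutator_mul_add_mul_commutator (A K B : Matrix n n R) :
    trace ((A * K - K * A) * B + A * (K * B - B * K)) = 2 * trace (K * (B * A - A * B)) := by
  simp only [sub_mul, mul_sub, trace_add, trace_sub, ← Matrix.mul_assoc]
  rw [← trace_mul_cycle K B A, trace_mul_cycle A B K]
  ring

theorem mul_self_fin_two (M : Matrix (Fin 2) (Fin 2) R) :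
    M * M = M.trace • M - M.det • 1 := by
  ext i j
  fin_cases i <;> fin_cases j <;>
    simp only [Fin.zero_eta, Fin.mk_one, Fin.isValue, mul_apply, Fin.sum_univ_two, trace_fin_two,
      det_fin_two, Matrix.sub_apply, Matrix.smul_apply, smul_eq_mul, one_apply_eq, one_apply_ne,
      ne_eq, zero_ne_one, one_ne_zero, not_false_eq_true, mul_one, mul_zero, sub_zero] <;> ring

theorem trace_mul_self_fin_two (M : Matrix (Fin 2) (Fin 2) R) :
    trace (M * M) = M.trace ^ 2 - 2 * M.det := by
  rw [mul_self_fin_two, trace_sub, trace_smul, trace_smul, trace_one]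
  simp only [Fintype.card_fin, smul_eq_mul]
  ring

theorem mul_self_fin_two_of_trace_eq_zero {A : Matrix (Fin 2) (Fin 2) R} (hA : A.trace = 0) :
    A * A = -A.det • 1 := by
  rw [mul_self_fin_two, hA, zero_smul, zero_sub, neg_smul]

variable [StarRing R]

theorem trace_commutator_conjTranspose_sq_fin_two {A : Matrix (Fin 2) (Fin 2) R}
    (hA : A.trace = 0) :
    trace ((A * Aᴴ - Aᴴ * A) * (A * Aᴴ - Aᴴ * A)) =
      2 * trace (A * Aᴴ) ^ 2 - 8 * (A.det * star A.det) := by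
  have hsq : trace (A * Aᴴ * (A * Aᴴ)) = trace (A * Aᴴ) ^ 2 - 2 * (A.det * star A.det) := by
    rw [trace_mul_self_fin_two, det_mul, det_conjTranspose]
  have hcross : trace (A * Aᴴ * (Aᴴ * A)) = 2 * (A.det * star A.det) := by
    have hA' : Aᴴ * Aᴴ = -star A.det • 1 := by
      rw [← conjTranspose_mul, mul_self_fin_two_of_trace_eq_zero hA, conjTranspose_smul,
        conjTranspose_one, star_neg]
    calc trace (A * Aᴴ * (Aᴴ * A)) = trace (A * A * (Aᴴ * Aᴴ)) := by
          rw [← Matrix.mul_assoc, trace_mul_comm]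
          simp only [Matrix.mul_assoc]
      _ = 2 * (A.det * star A.det) := by
          rw [hA', mul_self_fin_two_of_trace_eq_zero hA]
          simp only [smul_mul_smul, Matrix.mul_one, trace_smul, trace_one, Fintype.card_fin,
            smul_eq_mul]
          push_cast
          ring
  have hsq_swap : trace (Aᴴ * A * (Aᴴ * A)) = trace (A * Aᴴ * (A * Aᴴ)) := by
    rw [Matrix.mul_assoc, trace_mul_comm]
    simp only [Matrix.mul_assoc]
  have hcross_swap : trace (Aᴴ * A * (A * Aᴴ)) = trace (A * Aᴴ * (Aᴴ * A)) := trace_mul_comm _ _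
  simp only [sub_mul, mul_sub, trace_sub]
  rw [hsq_swap, hcross_swap, hsq, hcross]
  ring

end Matrix

theorem Complex.trace_mul_conjTranspose_self_eq_ofReal_re {m n : Type*} [Fintype m] [Fintype n]
    (A : Matrix m n ℂ) : trace (A * Aᴴ) = ((trace (A * Aᴴ)).re : ℂ) :=
  (Complex.conj_eq_iff_re.mp <| by
    rw [← Complex.star_def, ← trace_conjTranspose, conjTranspose_mul,
      conjTranspose_conjTranspose]).symm

/-- For a traceless complex 2×2 matrix `A` with `K = [A,Aᴴ]`:
`tr([A,K]·Aᴴ + A·[K,Aᴴ]) = 4(4|det A|² - tr(AAᴴ)²) ≤ 0`, with equality iff `A` is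
normal; in particular the flow of `W(A) = (1/4)[A,[A,Aᴴ]]` does not increase the
Frobenius norm. -/
theorem sl2_Lie_derivative_norm_nonpos (A : Matrix (Fin 2) (Fin 2) ℂ)
    (hA : Matrix.trace A = 0)
    (K : Matrix (Fin 2) (Fin 2) ℂ) (hK : K = A * Aᴴ - Aᴴ * A) :
    Matrix.trace ((A * K - K * A) * Aᴴ + A * (K * Aᴴ - Aᴴ * K)) =
      ((4 * (4 * ‖Matrix.det A‖ ^ 2 - ((Matrix.trace (A * Aᴴ)).re) ^ 2) : ℝ) : ℂ) ∧
    4 * (4 * ‖Matrix.det A‖ ^ 2 - ((Matrix.trace (A * Aᴴ)).re) ^ 2) ≤ 0 ∧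
    (4 * (4 * ‖Matrix.det A‖ ^ 2 - ((Matrix.trace (A * Aᴴ)).re) ^ 2) = 0
      ↔ A * Aᴴ = Aᴴ * A) := by
  have hKh : Kᴴ = K := by
    rw [hK, conjTranspose_sub, conjTranspose_mul, conjTranspose_mul, conjTranspose_conjTranspose]
  have hLie :
      trace ((A * K - K * A) * Aᴴ + A * (K * Aᴴ - Aᴴ * K)) = -2 * trace (K * Kᴴ) := by
    rw [trace_commutator_mul_add_mul_commutator, hKh, ← neg_sub, hK]
    simp only [Matrix.mul_neg, trace_neg]
    ring
  have hFrob : trace (K * Kᴴ) =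
      ((2 * ((trace (A * Aᴴ)).re ^ 2 - 4 * ‖A.det‖ ^ 2) : ℝ) : ℂ) := by
    rw [hKh, hK, trace_commutator_conjTranspose_sq_fin_two hA, Complex.star_def,
      Complex.mul_conj, Complex.normSq_eq_norm_sq,
      Complex.trace_mul_conjTranspose_self_eq_ofReal_re]
    simp only [Complex.ofReal_re]
    push_cast
    ring
  have hnonneg : 0 ≤ (trace (A * Aᴴ)).re ^ 2 - 4 * ‖A.det‖ ^ 2 := by
    have := (posSemidef_self_mul_conjTranspose K).trace_nonneg
    rw [hFrob, Complex.zero_le_real] at this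
    linarith
  refine ⟨by rw [hLie, hFrob]; push_cast; ring, by linarith, ?_⟩
  calc 4 * (4 * ‖A.det‖ ^ 2 - (trace (A * Aᴴ)).re ^ 2) = 0
      ↔ trace (K * Kᴴ) = 0 := by
        rw [hFrob, Complex.ofReal_eq_zero]
        constructor <;> intro h <;> linarith
    _ ↔ K = 0 := trace_mul_conjTranspose_self_eq_zero_iff
    _ ↔ A * Aᴴ = Aᴴ * A := by rw [hK, sub_eq_zero]
end

section
/- For each n ≥ 0 there is a constant C = C(n) such that |θ₁⁽ⁿ⁾(x²)| ≤ C/(1+x)^(2n+1) for all x ≥ 0, where θ₁ is the smooth function on ℝ≥0 defined by θ₁(x²) = tanh(x)/x. -/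
namespace Theta1Aux

structure Term where
  c : ℝ
  a : ℕ
  b : ℕ
  k : ℕ

noncomputable def teval (t : Term) (x : ℝ) : ℝ :=
  t.c * Real.tanh x ^ t.a * (1 - Real.tanh x ^ 2) ^ t.b * (x⁻¹) ^ t.k

noncomputable def leval (L : List Term) (x : ℝ) : ℝ :=
  (L.map (fun t => teval t x)).sum

@[simp] lemma leval_nil (x : ℝ) : leval [] x = 0 := rfl
@[simp] lemma leval_cons (t : Term) (L : List Term) (x : ℝ) :
    leval (t :: L) x = teval t x + leval L x := rfl

lemma leval_append (A B : List Term) (x : ℝ) :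
    leval (A ++ B) x = leval A x + leval B x := by
  simp [leval]

lemma hasDerivAt_tanh' (x : ℝ) : HasDerivAt Real.tanh (1 - Real.tanh x ^ 2) x := by
  have hc := Real.cosh_pos x
  have h : HasDerivAt (fun y => Real.sinh y / Real.cosh y)
      ((Real.cosh x * Real.cosh x - Real.sinh x * Real.sinh x) / Real.cosh x ^ 2) x :=
    (Real.hasDerivAt_sinh x).div (Real.hasDerivAt_cosh x) hc.ne'
  have heq : Real.tanh = fun y => Real.sinh y / Real.cosh y :=
    funext fun y => Real.tanh_eq_sinh_div_cosh y
  rw [heq]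
  convert h using 1
  have h2 := Real.cosh_sq_sub_sinh_sq x
  simp only []
  field_simp

lemma one_sub_tanh_sq (x : ℝ) : 1 - Real.tanh x ^ 2 = (Real.cosh x ^ 2)⁻¹ := by
  have hc := Real.cosh_pos x
  rw [Real.tanh_eq_sinh_div_cosh]
  have h2 := Real.cosh_sq_sub_sinh_sq x
  field_simp
  linarith [h2]

noncomputable def dTerm (t : Term) : List Term :=
  [⟨t.c * t.a, t.a - 1, t.b + 1, t.k⟩,
   ⟨-2 * t.b * t.c, t.a + 1, t.b, t.k⟩,
   ⟨-(t.k : ℝ) * t.c, t.a, t.b, t.k + 1⟩]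

noncomputable def shift (t : Term) : Term := ⟨t.c / 2, t.a, t.b, t.k + 1⟩

lemma tanh_ne_zero {x : ℝ} (hx : x ≠ 0) : Real.tanh x ≠ 0 := by
  rw [Real.tanh_eq_sinh_div_cosh]
  exact div_ne_zero (by simpa using hx) (Real.cosh_pos x).ne'

lemma one_sub_tanh_sq_pos (x : ℝ) : 0 < 1 - Real.tanh x ^ 2 := by
  rw [one_sub_tanh_sq]
  positivity

lemma teval_hasDerivAt (t : Term) {x : ℝ} (hx : x ≠ 0) :
    HasDerivAt (fun y => teval t y) (leval (dTerm t) x) x := by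
  have h1 := hasDerivAt_tanh' x
  have ha : HasDerivAt (fun y => Real.tanh y ^ t.a)
      ((t.a : ℝ) * Real.tanh x ^ (t.a - 1) * (1 - Real.tanh x ^ 2)) x := h1.pow t.a
  have hb : HasDerivAt (fun y => (1 - Real.tanh y ^ 2) ^ t.b)
      ((t.b : ℝ) * (1 - Real.tanh x ^ 2) ^ (t.b - 1) *
        (0 - (2 * Real.tanh x ^ 1 * (1 - Real.tanh x ^ 2)))) x :=
    ((hasDerivAt_const x (1:ℝ)).sub (h1.pow 2)).pow t.b
  have hk : HasDerivAt (fun y : ℝ => (y⁻¹) ^ t.k)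
      ((t.k : ℝ) * (x⁻¹) ^ (t.k - 1) * (-(x ^ 2)⁻¹)) x := (hasDerivAt_inv hx).pow t.k
  have h := (((ha.const_mul t.c).mul hb).mul hk)
  have h : HasDerivAt (fun y => t.c * Real.tanh y ^ t.a * (1 - Real.tanh y ^ 2) ^ t.b * (y⁻¹) ^ t.k) _ x := h
  convert h using 1
  · rfl
  obtain ⟨c, a, b, k⟩ := t
  simp only [dTerm, leval, teval, List.map_cons, List.map_nil, List.sum_cons, List.sum_nil, Pi.mul_apply]
  have hT := tanh_ne_zero hx
  have hS := (one_sub_tanh_sq_pos x).ne'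
  rcases a with _ | a <;> rcases b with _ | b <;> rcases k with _ | k <;>
    · push_cast
      simp only [inv_pow]
      field_simp
      try ring

lemma leval_hasDerivAt (L : List Term) {x : ℝ} (hx : x ≠ 0) :
    HasDerivAt (fun y => leval L y) (leval (L.flatMap dTerm) x) x := by
  induction L with
  | nil => simpa [leval] using hasDerivAt_const x (0:ℝ)
  | cons t L ih =>
    have h := (teval_hasDerivAt t hx).add ih
    simpa [List.flatMap_cons, leval_append, Pi.add_def] using h

lemma leval_map_shift (L : List Term) {x : ℝ} (hx : x ≠ 0) :
    leval (L.map shift) x = leval L x / (2 * x) := by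
  induction L with
  | nil => simp
  | cons t L ih =>
    simp only [List.map_cons, leval_cons, ih]
    have ht : teval (shift t) x = teval t x / (2 * x) := by
      have h2x : (2:ℝ) * x ≠ 0 := mul_ne_zero two_ne_zero hx
      rw [eq_div_iff h2x]
      simp only [teval, shift]
      rw [pow_succ x⁻¹ t.k]
      field_simp
    rw [ht]
    ring

def Good (n : ℕ) (t : Term) : Prop :=
  t.c = 0 ∨ (1 ≤ t.k ∧ (1 ≤ t.b ∨ 2 * n + 1 ≤ t.k))

lemma good_step {n : ℕ} {t s : Term} (h : Good n t) (hs : s ∈ (dTerm t).map shift) :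
    Good (n + 1) s := by
  obtain ⟨c, a, b, k⟩ := t
  rcases h with hc | ⟨hk, hbk⟩
  · subst hc
    simp only [dTerm, shift, List.map_cons, List.map_nil, List.mem_cons, List.mem_singleton] at hs
    rcases hs with rfl | rfl | rfl | h
    · left; simp
    · left; simp
    · left; simp
    · exact absurd h List.not_mem_nil
  · simp only [dTerm, shift, List.map_cons, List.map_nil, List.mem_cons, List.mem_singleton] at hs
    rcases hs with rfl | rfl | rfl | h
    · right; exact ⟨by dsimp only at *; omega, Or.inl (by dsimp only at *; omega)⟩
    · rcases Nat.eq_zero_or_pos b with hb | hb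
      · left; simp [hb]
      · right; exact ⟨by dsimp only at *; omega, Or.inl (by dsimp only at *; omega)⟩
    · rcases hbk with hb | hk2
      · right; exact ⟨by dsimp only at *; omega, Or.inl (by dsimp only at *; omega)⟩
      · right; exact ⟨by dsimp only at *; omega, Or.inr (by dsimp only at *; omega)⟩
    · exact absurd h List.not_mem_nil

lemma rep (θ₁ : ℝ → ℝ) (hθ : ContDiff ℝ (⊤ : ℕ∞) θ₁)
    (hθ₁ : ∀ x : ℝ, x ≠ 0 → θ₁ (x ^ 2) = Real.tanh x / x) (n : ℕ) :
    ∃ L : List Term, (∀ t ∈ L, Good n t) ∧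
      ∀ x : ℝ, 0 < x → iteratedDeriv n θ₁ (x ^ 2) = leval L x := by
  induction n with
  | zero =>
    refine ⟨[⟨1, 1, 0, 1⟩], ?_, ?_⟩
    · rintro t ht
      simp only [List.mem_singleton] at ht
      subst ht
      exact Or.inr ⟨le_refl 1, Or.inr (le_refl 1)⟩
    · intro x hx
      simp [iteratedDeriv_zero, hθ₁ x hx.ne', teval, leval, div_eq_mul_inv]
  | succ n ih =>
    obtain ⟨L, hG, hV⟩ := ih
    refine ⟨(L.flatMap dTerm).map shift, ?_, ?_⟩
    · intro s hs
      simp only [List.mem_map, List.mem_flatMap] at hs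
      obtain ⟨u, ⟨t, htL, htu⟩, rfl⟩ := hs
      exact good_step (hG t htL) (List.mem_map_of_mem (f := shift) htu)
    · intro x hx
      have hD := leval_hasDerivAt L hx.ne'
      have hdiff : Differentiable ℝ (iteratedDeriv n θ₁) :=
        hθ.differentiable_iteratedDeriv n (by exact_mod_cast lt_top_iff_ne_top.2 (by simp))
      have hg : HasDerivAt (iteratedDeriv n θ₁) (iteratedDeriv (n + 1) θ₁ (x ^ 2))
          ((fun y : ℝ => y ^ 2) x) := by
        rw [iteratedDeriv_succ]
        exact (hdiff _).hasDerivAt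
      have hx2 : HasDerivAt (fun y : ℝ => y ^ 2) (2 * x) x := by
        simpa using hasDerivAt_pow 2 x
      have hF : HasDerivAt (fun y : ℝ => iteratedDeriv n θ₁ (y ^ 2))
          (iteratedDeriv (n + 1) θ₁ (x ^ 2) * (2 * x)) x :=
        HasDerivAt.comp (h := fun y : ℝ => y ^ 2) x hg hx2
      have hEq : (fun y : ℝ => iteratedDeriv n θ₁ (y ^ 2)) =ᶠ[nhds x] fun y => leval L y :=
        Filter.eventuallyEq_of_mem (isOpen_Ioi.mem_nhds hx) fun y hy => hV y hy
      have hF' : HasDerivAt (fun y => leval L y)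
          (iteratedDeriv (n + 1) θ₁ (x ^ 2) * (2 * x)) x :=
        hF.congr_of_eventuallyEq hEq.symm
      have huniq := hF'.unique hD
      rw [leval_map_shift _ hx.ne', ← huniq]
      field_simp

lemma exp_lower {m : ℕ} {x : ℝ} (hx : 0 ≤ x) : x ^ m / (Nat.factorial m : ℝ) ≤ Real.exp x := by
  calc x ^ m / (Nat.factorial m : ℝ)
      ≤ ∑ i ∈ Finset.range (m + 1), x ^ i / (Nat.factorial i : ℝ) := by
        apply Finset.single_le_sum (f := fun i => x ^ i / (Nat.factorial i : ℝ))
        · intro i _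
          positivity
        · exact Finset.self_mem_range_succ m
    _ ≤ Real.exp x := Real.sum_le_exp_of_nonneg hx _

lemma S_small (n : ℕ) {x : ℝ} (hx : 1 ≤ x) :
    1 - Real.tanh x ^ 2 ≤ 4 * (Nat.factorial (2 * n + 1) : ℝ) / x ^ (2 * n + 1) := by
  have hx0 : (0 : ℝ) < x := lt_of_lt_of_le one_pos hx
  set m := 2 * n + 1 with hm
  have hexp : x ^ m / (Nat.factorial m : ℝ) ≤ Real.exp x := exp_lower hx0.le
  have hc : Real.exp x / 2 ≤ Real.cosh x := by
    rw [Real.cosh_eq]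
    have := (Real.exp_pos (-x)).le
    linarith
  have he1 : (1 : ℝ) ≤ Real.exp x := Real.one_le_exp hx0.le
  have hfac : (0 : ℝ) < (Nat.factorial m : ℝ) := by positivity
  have h1 : x ^ m / (4 * (Nat.factorial m : ℝ)) ≤ Real.cosh x ^ 2 := by
    have h2 : Real.exp x / 4 ≤ Real.cosh x ^ 2 := by nlinarith [Real.exp_pos x]
    have h3 : x ^ m / (Nat.factorial m : ℝ) / 4 ≤ Real.exp x / 4 := by linarith
    calc x ^ m / (4 * (Nat.factorial m : ℝ)) = x ^ m / (Nat.factorial m : ℝ) / 4 := by ring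
      _ ≤ Real.exp x / 4 := h3
      _ ≤ Real.cosh x ^ 2 := h2
  rw [one_sub_tanh_sq]
  have hpos : (0 : ℝ) < x ^ m / (4 * (Nat.factorial m : ℝ)) := by positivity
  calc (Real.cosh x ^ 2)⁻¹ ≤ (x ^ m / (4 * (Nat.factorial m : ℝ)))⁻¹ := by
        apply inv_anti₀ hpos h1
    _ = 4 * (Nat.factorial m : ℝ) / x ^ m := by rw [inv_div]

lemma teval_bound {n : ℕ} {t : Term} (h : Good n t) {x : ℝ} (hx : 1 ≤ x) :
    |teval t x| ≤ |t.c| * (4 * (Nat.factorial (2 * n + 1) : ℝ)) / x ^ (2 * n + 1) := by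
  have hx0 : (0 : ℝ) < x := lt_of_lt_of_le one_pos hx
  set m := 2 * n + 1 with hm
  have hS0 : 0 < 1 - Real.tanh x ^ 2 := one_sub_tanh_sq_pos x
  have hS1 : 1 - Real.tanh x ^ 2 ≤ 1 := by nlinarith [sq_nonneg (Real.tanh x)]
  have hT : |Real.tanh x| ≤ 1 := by
    rw [abs_le]
    constructor <;> nlinarith
  have hI0 : (0 : ℝ) ≤ x⁻¹ := by positivity
  have hI1 : x⁻¹ ≤ 1 := by
    rw [inv_le_one_iff₀]
    right; exact hx
  have hfac : (1 : ℝ) ≤ 4 * (Nat.factorial m : ℝ) := by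
    have : (1 : ℝ) ≤ (Nat.factorial m : ℝ) := by exact_mod_cast Nat.one_le_iff_ne_zero.2 m.factorial_ne_zero
    linarith
  have habs : |teval t x| =
      |t.c| * |Real.tanh x| ^ t.a * (1 - Real.tanh x ^ 2) ^ t.b * (x⁻¹) ^ t.k := by
    rw [teval, abs_mul, abs_mul, abs_mul, abs_pow, abs_pow, abs_pow,
      abs_of_pos hS0, abs_of_nonneg hI0]
  have hTa : |Real.tanh x| ^ t.a ≤ 1 := pow_le_one₀ (abs_nonneg _) hT
  have hSb1 : (1 - Real.tanh x ^ 2) ^ t.b ≤ 1 := pow_le_one₀ hS0.le hS1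
  have hIk1 : (x⁻¹) ^ t.k ≤ 1 := pow_le_one₀ hI0 hI1
  rcases h with hc | ⟨hk, hbk⟩
  · rw [habs, hc]
    simp only [abs_zero, zero_mul]
    positivity
  · rcases hbk with hb | hkm
    · have hSb : (1 - Real.tanh x ^ 2) ^ t.b ≤ (1 - Real.tanh x ^ 2) ^ 1 :=
        pow_le_pow_of_le_one hS0.le hS1 hb
      calc |teval t x| ≤ |t.c| * 1 * ((1 - Real.tanh x ^ 2) ^ t.b) * 1 := by
            rw [habs]; gcongr
          _ = |t.c| * (1 - Real.tanh x ^ 2) ^ t.b := by ring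
          _ ≤ |t.c| * (4 * (Nat.factorial m : ℝ) / x ^ m) := by
            apply mul_le_mul_of_nonneg_left _ (abs_nonneg _)
            calc (1 - Real.tanh x ^ 2) ^ t.b ≤ (1 - Real.tanh x ^ 2) ^ 1 := hSb
              _ = 1 - Real.tanh x ^ 2 := pow_one _
              _ ≤ 4 * (Nat.factorial m : ℝ) / x ^ m := S_small n hx
          _ = |t.c| * (4 * (Nat.factorial m : ℝ)) / x ^ m := by ring
    · have hIk : (x⁻¹) ^ t.k ≤ (x⁻¹) ^ m := pow_le_pow_of_le_one hI0 hI1 hkm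
      calc |teval t x| ≤ |t.c| * 1 * 1 * (x⁻¹) ^ m := by
            rw [habs]; gcongr
          _ = |t.c| * 1 / x ^ m := by
            rw [inv_pow]; ring
          _ ≤ |t.c| * (4 * (Nat.factorial m : ℝ)) / x ^ m := by gcongr

lemma leval_bound (n : ℕ) (L : List Term) (hG : ∀ t ∈ L, Good n t) {x : ℝ} (hx : 1 ≤ x) :
    |leval L x| ≤ (L.map (fun t => |t.c|)).sum * (4 * (Nat.factorial (2 * n + 1) : ℝ))
      / x ^ (2 * n + 1) := by
  have hx0 : (0 : ℝ) < x := lt_of_lt_of_le one_pos hx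
  induction L with
  | nil => simp
  | cons t L ih =>
    have h1 := teval_bound (hG t (List.mem_cons_self)) hx
    have h2 := ih fun s hs => hG s (List.mem_cons_of_mem t hs)
    calc |leval (t :: L) x| ≤ |teval t x| + |leval L x| := by
          rw [leval_cons]; exact abs_add_le _ _
      _ ≤ |t.c| * (4 * (Nat.factorial (2 * n + 1) : ℝ)) / x ^ (2 * n + 1)
          + (L.map (fun t => |t.c|)).sum * (4 * (Nat.factorial (2 * n + 1) : ℝ))
            / x ^ (2 * n + 1) := add_le_add h1 h2
      _ = ((t :: L).map (fun t => |t.c|)).sum * (4 * (Nat.factorial (2 * n + 1) : ℝ))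
          / x ^ (2 * n + 1) := by
          simp [add_mul, add_div]

end Theta1Aux

/-- For each `n ≥ 0` there is a constant `C = C(n)` such that
`|θ₁⁽ⁿ⁾(x²)| ≤ C/(1+x)^(2n+1)` for all `x ≥ 0`, where `θ₁` is the smooth function
with `θ₁(x²) = tanh(x)/x`. -/
theorem theta1_deriv_bound (θ₁ : ℝ → ℝ) (hθ : ContDiff ℝ (⊤ : ℕ∞) θ₁)
    (hθ₁ : ∀ x : ℝ, x ≠ 0 → θ₁ (x ^ 2) = Real.tanh x / x) (hθ₀ : θ₁ 0 = 1) :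
    ∀ n : ℕ, ∃ C : ℝ, 0 < C ∧ ∀ x : ℝ, 0 ≤ x →
      |iteratedDeriv n θ₁ (x ^ 2)| ≤ C / (1 + x) ^ (2 * n + 1) := by
  intro n
  obtain ⟨L, hG, hV⟩ := Theta1Aux.rep θ₁ hθ hθ₁ n
  have hA0 : 0 ≤ (L.map (fun t => |t.c|)).sum := by
    apply List.sum_nonneg
    intro a ha
    simp only [List.mem_map] at ha
    obtain ⟨t, _, rfl⟩ := ha
    exact abs_nonneg _
  set A : ℝ := (L.map (fun t => |t.c|)).sum with hA
  have hC10 : 0 ≤ A * (4 * (Nat.factorial (2 * n + 1) : ℝ)) := by positivity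
  have hcont : Continuous (iteratedDeriv n θ₁) := hθ.continuous_iteratedDeriv n (by exact_mod_cast le_top)
  obtain ⟨C₂, hC₂⟩ := (isCompact_Icc (a := (0 : ℝ)) (b := 1)).exists_bound_of_continuousOn
    hcont.continuousOn
  have hC20 : 0 ≤ C₂ := le_trans (norm_nonneg _) (hC₂ 0 (by norm_num))
  set C₁ : ℝ := A * (4 * (Nat.factorial (2 * n + 1) : ℝ)) with hC1
  refine ⟨(C₁ + C₂ + 1) * 2 ^ (2 * n + 1), by positivity, ?_⟩
  intro x hx
  have h1x : (0 : ℝ) < 1 + x := by linarith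
  rcases le_or_gt x 1 with hle | hgt
  · have hx2 : x ^ 2 ∈ Set.Icc (0 : ℝ) 1 := ⟨by positivity, by nlinarith⟩
    have hb := hC₂ _ hx2
    rw [Real.norm_eq_abs] at hb
    have hfin : C₂ ≤ (C₁ + C₂ + 1) * 2 ^ (2 * n + 1) / (1 + x) ^ (2 * n + 1) := by
      rw [le_div_iff₀ (by positivity)]
      calc C₂ * (1 + x) ^ (2 * n + 1) ≤ C₂ * 2 ^ (2 * n + 1) := by
            gcongr
            linarith
        _ ≤ (C₁ + C₂ + 1) * 2 ^ (2 * n + 1) := by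
            apply mul_le_mul_of_nonneg_right (by linarith) (by positivity)
    exact le_trans hb hfin
  · rw [hV x (by linarith)]
    have hb := Theta1Aux.leval_bound n L hG hgt.le
    refine le_trans hb ?_
    rw [div_le_div_iff₀ (by positivity) (by positivity)]
    calc C₁ * (1 + x) ^ (2 * n + 1) ≤ C₁ * (2 * x) ^ (2 * n + 1) := by
          gcongr
          linarith
      _ = C₁ * 2 ^ (2 * n + 1) * x ^ (2 * n + 1) := by rw [mul_pow]; ring
      _ ≤ (C₁ + C₂ + 1) * 2 ^ (2 * n + 1) * x ^ (2 * n + 1) := by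
          apply mul_le_mul_of_nonneg_right _ (by positivity)
          apply mul_le_mul_of_nonneg_right (by linarith) (by positivity)
end

section
/- For each n ≥ 0 there is a constant C = C(n) such that |θ₂⁽ⁿ⁾(x²)| ≤ C·cosh(x)/(1+x)ⁿ and |θ₃⁽ⁿ⁾(x²)| ≤ C·cosh(x)/(1+x)^(n+1) for all x ≥ 0, where θ₂, θ₃ are the smooth functions on ℝ≥0 with θ₂(x²) = cosh(x) and θ₃(x²) = sinh(x)/x. -/
open Real Filter Set Topology

private lemma iterSmooth {f : ℝ → ℝ} (h : ContDiff ℝ (⊤ : ℕ∞) f) (n : ℕ) :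
    ContDiff ℝ (⊤ : ℕ∞) (iteratedDeriv n f) := by
  rw [iteratedDeriv_eq_iterate]
  exact ContDiff.iterate_deriv n (h.of_le (by simp))

private lemma sinhLe (x : ℝ) (hx : 0 ≤ x) : Real.sinh x ≤ x * Real.cosh x := by
  have key : MonotoneOn (fun y : ℝ => y * Real.cosh y - Real.sinh y) (Set.Ici 0) := by
    apply monotoneOn_of_deriv_nonneg (convex_Ici 0)
    · fun_prop
    · intro y _
      exact (((differentiableAt_id.mul Real.differentiable_cosh.differentiableAt)).sub
        Real.differentiable_sinh.differentiableAt).differentiableWithinAt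
    · intro y hy
      rw [interior_Ici] at hy
      have h1 : HasDerivAt (fun y : ℝ => y * Real.cosh y - Real.sinh y)
          (1 * Real.cosh y + y * Real.sinh y - Real.cosh y) y :=
        ((hasDerivAt_id' y).mul (Real.hasDerivAt_cosh y)).sub (Real.hasDerivAt_sinh y)
      rw [h1.deriv]
      have h2 : (0:ℝ) ≤ Real.sinh y := Real.sinh_nonneg_iff.2 (le_of_lt hy)
      have h3 : (0:ℝ) < y := hy
      nlinarith
  have := key (Set.self_mem_Ici) (Set.mem_Ici.2 hx) hx
  simpa using this

private lemma extPos {f g : ℝ → ℝ} (hf : Continuous f) (hg : ContinuousAt g 0)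
    (h : ∀ x : ℝ, 0 < x → |f x| ≤ g x) : ∀ x : ℝ, 0 ≤ x → |f x| ≤ g x := by
  intro x hx
  rcases hx.lt_or_eq with hx' | rfl
  · exact h x hx'
  · have l1 : Tendsto (fun y => |f y|) (𝓝[>] (0:ℝ)) (𝓝 |f 0|) :=
      (hf.abs.tendsto 0).mono_left nhdsWithin_le_nhds
    have l2 : Tendsto g (𝓝[>] (0:ℝ)) (𝓝 (g 0)) := hg.tendsto.mono_left nhdsWithin_le_nhds
    exact le_of_tendsto_of_tendsto l1 l2 (eventually_nhdsWithin_of_forall fun y hy => h y hy)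

section rel
variable {θ₂ θ₃ : ℝ → ℝ}
  (hθ₂smooth : ContDiff ℝ (⊤ : ℕ∞) θ₂) (hθ₃smooth : ContDiff ℝ (⊤ : ℕ∞) θ₃)
  (hθ₂ : ∀ x : ℝ, θ₂ (x ^ 2) = Real.cosh x)
  (hθ₃ : ∀ x : ℝ, x ≠ 0 → θ₃ (x ^ 2) = Real.sinh x / x)

include hθ₂smooth hθ₂ hθ₃ in
private lemma relA0 : ∀ y : ℝ, 0 < y → deriv θ₂ y = θ₃ y / 2 := by
  intro y hy
  set x := Real.sqrt y with hxdef
  have hx : 0 < x := Real.sqrt_pos.2 hy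
  have hx2 : x ^ 2 = y := Real.sq_sqrt hy.le
  have h1 : HasDerivAt (fun t : ℝ => θ₂ (t ^ 2)) (deriv θ₂ (x ^ 2) * (2 * x)) x := by
    have := (((hθ₂smooth.differentiable (by simp)) (x ^ 2)).hasDerivAt).comp x (hasDerivAt_pow 2 x)
    simpa [mul_comm, Function.comp_def] using this
  have h2 : (fun t : ℝ => θ₂ (t ^ 2)) = Real.cosh := funext hθ₂
  rw [h2] at h1
  have h3 := h1.unique (Real.hasDerivAt_cosh x)
  rw [← hx2, hθ₃ x hx.ne']
  field_simp at h3 ⊢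
  linarith

include hθ₃smooth hθ₂ hθ₃ in
private lemma relB0 : ∀ y : ℝ, 0 < y → 2 * y * deriv θ₃ y = θ₂ y - θ₃ y := by
  intro y hy
  set x := Real.sqrt y with hxdef
  have hx : 0 < x := Real.sqrt_pos.2 hy
  have hx2 : x ^ 2 = y := Real.sq_sqrt hy.le
  have h1 : HasDerivAt (fun t : ℝ => θ₃ (t ^ 2)) (deriv θ₃ (x ^ 2) * (2 * x)) x := by
    have := (((hθ₃smooth.differentiable (by simp)) (x ^ 2)).hasDerivAt).comp x (hasDerivAt_pow 2 x)
    simpa [mul_comm, Function.comp_def] using this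
  have hev : (fun t : ℝ => Real.sinh t / t) =ᶠ[𝓝 x] (fun t : ℝ => θ₃ (t ^ 2)) := by
    refine eventuallyEq_of_mem ((isOpen_compl_singleton (x := (0:ℝ))).mem_nhds hx.ne')
      fun t ht => (hθ₃ t ht).symm
  have h1' : HasDerivAt (fun t : ℝ => Real.sinh t / t) (deriv θ₃ (x ^ 2) * (2 * x)) x :=
    h1.congr_of_eventuallyEq hev
  have h2 : HasDerivAt (fun t : ℝ => Real.sinh t / t)
      ((Real.cosh x * x - Real.sinh x * 1) / x ^ 2) x :=
    (Real.hasDerivAt_sinh x).div (hasDerivAt_id x) hx.ne'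
  have h3 := h1'.unique h2
  have h4 : θ₃ y = Real.sinh x / x := by rw [← hx2]; exact hθ₃ x hx.ne'
  have h5 : θ₂ y = Real.cosh x := by rw [← hx2]; exact hθ₂ x
  rw [← hx2] at *
  rw [h4, h5]
  field_simp at h3 ⊢
  nlinarith [h3]

include hθ₂smooth hθ₃smooth hθ₂ hθ₃ in
private lemma relA : ∀ n : ℕ, ∀ y : ℝ, 0 < y →
    iteratedDeriv (n + 1) θ₂ y = iteratedDeriv n θ₃ y / 2 := by
  intro n
  induction n with
  | zero =>
    intro y hy
    simpa [iteratedDeriv_one, iteratedDeriv_zero] using relA0 hθ₂smooth hθ₂ hθ₃ y hy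
  | succ n ih =>
    intro y hy
    have hev : iteratedDeriv (n + 1) θ₂ =ᶠ[𝓝 y] fun z => iteratedDeriv n θ₃ z / 2 :=
      eventuallyEq_of_mem (isOpen_Ioi.mem_nhds hy) fun z hz => ih z hz
    rw [iteratedDeriv_succ, hev.deriv_eq, deriv_div_const, ← iteratedDeriv_succ]

include hθ₂smooth hθ₃smooth hθ₂ hθ₃ in
private lemma relB : ∀ n : ℕ, ∀ y : ℝ, 0 < y →
    2 * y * iteratedDeriv (n + 1) θ₃ y =
      iteratedDeriv n θ₂ y - (2 * n + 1) * iteratedDeriv n θ₃ y := by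
  intro n
  induction n with
  | zero =>
    intro y hy
    simpa [iteratedDeriv_one, iteratedDeriv_zero] using relB0 hθ₃smooth hθ₂ hθ₃ y hy
  | succ n ih =>
    intro y hy
    have hd2 : ∀ k (z : ℝ), HasDerivAt (iteratedDeriv k θ₂) (iteratedDeriv (k+1) θ₂ z) z := by
      intro k z
      rw [iteratedDeriv_succ]
      exact (((iterSmooth hθ₂smooth k).differentiable (by simp)) z).hasDerivAt
    have hd3 : ∀ k (z : ℝ), HasDerivAt (iteratedDeriv k θ₃) (iteratedDeriv (k+1) θ₃ z) z := by
      intro k z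
      rw [iteratedDeriv_succ]
      exact (((iterSmooth hθ₃smooth k).differentiable (by simp)) z).hasDerivAt
    have hF : HasDerivAt (fun z => 2 * z * iteratedDeriv (n + 1) θ₃ z)
        (2 * iteratedDeriv (n+1) θ₃ y + 2 * y * iteratedDeriv (n+2) θ₃ y) y := by
      have := ((hasDerivAt_id y).const_mul 2).mul (hd3 (n+1) y)
      exact this.congr_deriv (by rw [show n + 1 + 1 = n + 2 from rfl]; simp only [id, mul_one])
    have hG : HasDerivAt (fun z => iteratedDeriv n θ₂ z - (2 * n + 1) * iteratedDeriv n θ₃ z)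
        (iteratedDeriv (n+1) θ₂ y - (2 * n + 1) * iteratedDeriv (n+1) θ₃ y) y :=
      (hd2 n y).sub ((hd3 n y).const_mul _)
    have hev : (fun z => 2 * z * iteratedDeriv (n + 1) θ₃ z) =ᶠ[𝓝 y]
        (fun z => iteratedDeriv n θ₂ z - (2 * n + 1) * iteratedDeriv n θ₃ z) :=
      eventuallyEq_of_mem (isOpen_Ioi.mem_nhds hy) fun z hz => ih z hz
    have hF' : HasDerivAt (fun z => iteratedDeriv n θ₂ z - (2 * n + 1) * iteratedDeriv n θ₃ z)
        (2 * iteratedDeriv (n+1) θ₃ y + 2 * y * iteratedDeriv (n+2) θ₃ y) y :=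
      hF.congr_of_eventuallyEq hev.symm
    have key := hF'.unique hG
    push_cast
    have h22 : iteratedDeriv (n + 1 + 1) θ₃ y = iteratedDeriv (n + 2) θ₃ y := by norm_num
    rw [h22]
    linarith [key]
end rel

set_option maxHeartbeats 1000000 in
/-- For each `n ≥ 0` there is `C = C(n)` with `|θ₂⁽ⁿ⁾(x²)| ≤ C·cosh(x)/(1+x)ⁿ` and
`|θ₃⁽ⁿ⁾(x²)| ≤ C·cosh(x)/(1+x)^(n+1)` for all `x ≥ 0`, where `θ₂, θ₃` are the smooth
functions with `θ₂(x²) = cosh(x)` and `θ₃(x²) = sinh(x)/x`. -/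
theorem theta2_theta3_deriv_bounds (θ₂ θ₃ : ℝ → ℝ)
    (hθ₂smooth : ContDiff ℝ (⊤ : ℕ∞) θ₂) (hθ₃smooth : ContDiff ℝ (⊤ : ℕ∞) θ₃)
    (hθ₂ : ∀ x : ℝ, θ₂ (x ^ 2) = Real.cosh x)
    (hθ₃ : ∀ x : ℝ, x ≠ 0 → θ₃ (x ^ 2) = Real.sinh x / x) (hθ₃₀ : θ₃ 0 = 1) :
    ∀ n : ℕ, ∃ C : ℝ, 0 < C ∧ ∀ x : ℝ, 0 ≤ x →
      |iteratedDeriv n θ₂ (x ^ 2)| ≤ C * Real.cosh x / (1 + x) ^ n ∧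
      |iteratedDeriv n θ₃ (x ^ 2)| ≤ C * Real.cosh x / (1 + x) ^ (n + 1) := by
  intro n
  induction n with
  | zero =>
    refine ⟨2, by norm_num, fun x hx => ⟨?_, ?_⟩⟩
    · rw [iteratedDeriv_zero, hθ₂ x, pow_zero, abs_of_pos (Real.cosh_pos x)]
      have := Real.cosh_pos (x := x)
      linarith
    · have claim : ∀ x : ℝ, 0 < x →
          |θ₃ (x ^ 2)| ≤ 2 * Real.cosh x / (1 + x) ^ (0 + 1) := by
        intro x hx
        rw [hθ₃ x hx.ne', zero_add, pow_one,
          abs_of_nonneg (div_nonneg (Real.sinh_nonneg_iff.2 hx.le) hx.le)]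
        rw [div_le_div_iff₀ hx (by linarith)]
        nlinarith [sinhLe x hx.le, mul_le_mul_of_nonneg_left (Real.sinh_lt_cosh x).le hx.le,
          Real.cosh_pos (x := x)]
      rw [iteratedDeriv_zero]
      exact extPos (hθ₃smooth.continuous.comp (continuous_pow 2))
        (by
          apply ContinuousAt.div
          · fun_prop
          · fun_prop
          · norm_num) claim x hx
  | succ n ih =>
    obtain ⟨C, hC, hP⟩ := ih
    obtain ⟨M, hM⟩ := (isCompact_Icc (a := (0:ℝ)) (b := 1)).exists_bound_of_continuousOn
      ((iterSmooth hθ₃smooth (n + 1)).continuous.continuousOn)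
    set M0 : ℝ := max M 0 with hM0def
    set C' : ℝ := (4 * n + 4) * C + 2 ^ (n + 2) * (M0 + 1) with hC'def
    have hM0nn : 0 ≤ M0 := le_max_right _ _
    have hnn : (0:ℝ) ≤ (n:ℝ) := n.cast_nonneg
    have hpow2 : (0:ℝ) < 2 ^ (n + 2) := by positivity
    have hC'pos : 0 < C' := by positivity
    have hC2 : C ≤ C' := by nlinarith
    have hC'big : (4 * (n:ℝ) + 4) * C ≤ C' := by nlinarith
    have hC'M : 2 ^ (n + 2) * (M0 + 1) ≤ C' := by nlinarith
    -- claim for θ₂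
    have claim2 : ∀ x : ℝ, 0 < x →
        |iteratedDeriv (n + 1) θ₂ (x ^ 2)| ≤ C' * Real.cosh x / (1 + x) ^ (n + 1) := by
      intro x hx
      have hy : (0:ℝ) < x ^ 2 := by positivity
      rw [relA hθ₂smooth hθ₃smooth hθ₂ hθ₃ n (x ^ 2) hy, abs_div, abs_two]
      have hb := (hP x hx.le).2
      calc |iteratedDeriv n θ₃ (x ^ 2)| / 2 ≤ |iteratedDeriv n θ₃ (x ^ 2)| := by
            linarith [abs_nonneg (iteratedDeriv n θ₃ (x ^ 2))]
        _ ≤ C * Real.cosh x / (1 + x) ^ (n + 1) := hb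
        _ ≤ C' * Real.cosh x / (1 + x) ^ (n + 1) := by gcongr
    -- claim for θ₃
    have claim3 : ∀ x : ℝ, 0 < x →
        |iteratedDeriv (n + 1) θ₃ (x ^ 2)| ≤ C' * Real.cosh x / (1 + x) ^ (n + 1 + 1) := by
      intro x hx
      have hcosh1 : (1:ℝ) ≤ Real.cosh x := Real.one_le_cosh x
      have hppos : (0:ℝ) < (1 + x) ^ (n + 1 + 1) := by positivity
      rw [le_div_iff₀ hppos]
      rcases le_or_gt x 1 with hx1 | hx1
      · -- small x : compactness bound
        have hmem : x ^ 2 ∈ Set.Icc (0:ℝ) 1 := ⟨by positivity, by nlinarith⟩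
        have h1 : |iteratedDeriv (n + 1) θ₃ (x ^ 2)| ≤ M0 := by
          have := hM (x ^ 2) hmem
          rw [Real.norm_eq_abs] at this
          exact this.trans (le_max_left _ _)
        have hpow : (1 + x) ^ (n + 1 + 1) ≤ 2 ^ (n + 2) := by
          have : (n + 1 + 1) = (n + 2) := by norm_num
          rw [this]
          exact pow_le_pow_left₀ (by linarith) (by linarith) _
        calc |iteratedDeriv (n + 1) θ₃ (x ^ 2)| * (1 + x) ^ (n + 1 + 1)
            ≤ (M0 + 1) * 2 ^ (n + 2) := by
              apply mul_le_mul (by linarith) hpow (le_of_lt hppos) (by linarith)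
          _ = 2 ^ (n + 2) * (M0 + 1) := by ring
          _ ≤ C' := hC'M
          _ ≤ C' * Real.cosh x := by nlinarith
      · -- large x : recurrence bound
        have hy : (0:ℝ) < x ^ 2 := by positivity
        have hkey := relB hθ₂smooth hθ₃smooth hθ₂ hθ₃ n (x ^ 2) hy
        set a := iteratedDeriv n θ₂ (x ^ 2) with hadef
        set b := iteratedDeriv n θ₃ (x ^ 2) with hbdef
        set c := iteratedDeriv (n + 1) θ₃ (x ^ 2) with hcdef
        have hq : (0:ℝ) < 1 + x := by linarith
        have hpn : (0:ℝ) < (1 + x) ^ n := by positivity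
        have ha' : |a| * (1 + x) ^ n ≤ C * Real.cosh x :=
          (le_div_iff₀ hpn).1 (hP x hx.le).1
        have hb' : |b| * ((1 + x) ^ n * (1 + x)) ≤ C * Real.cosh x := by
          have := (le_div_iff₀ (by positivity : (0:ℝ) < (1 + x) ^ (n + 1))).1 (hP x hx.le).2
          rwa [pow_succ] at this
        have hb2 : |b| * ((1 + x) ^ n * 2) ≤ C * Real.cosh x := by
          refine le_trans ?_ hb'
          have h2x : ((1 + x) ^ n * 2) ≤ ((1 + x) ^ n * (1 + x)) := by nlinarith
          exact mul_le_mul_of_nonneg_left h2x (abs_nonneg b)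
        have h3 : 2 * x ^ 2 * |c| ≤ |a| + (2 * (n:ℝ) + 1) * |b| := by
          have e1 : |2 * x ^ 2 * c| = 2 * x ^ 2 * |c| := by
            rw [abs_mul, abs_of_pos (by positivity : (0:ℝ) < 2 * x ^ 2)]
          calc 2 * x ^ 2 * |c| = |2 * x ^ 2 * c| := e1.symm
            _ = |a - (2 * (n:ℝ) + 1) * b| := by rw [hkey]
            _ ≤ |a| + |(2 * (n:ℝ) + 1) * b| := abs_sub _ _
            _ = |a| + (2 * (n:ℝ) + 1) * |b| := by
                rw [abs_mul, abs_of_pos (by positivity : (0:ℝ) < 2 * (n:ℝ) + 1)]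
        have hexp : (1 + x) ^ (n + 1 + 1) = (1 + x) ^ n * (1 + x) ^ 2 := by
          rw [← pow_add]
        rw [hexp]
        have hsq : (1 + x) ^ 2 ≤ 4 * x ^ 2 := by nlinarith
        have hCK : (0:ℝ) ≤ C * Real.cosh x := by positivity
        have hC'K : (4 * (n:ℝ) + 4) * C * Real.cosh x ≤ C' * Real.cosh x :=
          mul_le_mul_of_nonneg_right hC'big (Real.cosh_pos (x := x)).le
        nlinarith [mul_le_mul_of_nonneg_left h3
            (by positivity : (0:ℝ) ≤ 2 * (1 + x) ^ n),
          mul_le_mul_of_nonneg_left hsq (mul_nonneg (abs_nonneg c) hpn.le),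
          mul_le_mul_of_nonneg_left hb2 (by positivity : (0:ℝ) ≤ 2 * (n:ℝ)),
          ha', hb2, hC'K, mul_nonneg hnn hCK, hCK, abs_nonneg c, abs_nonneg a, abs_nonneg b]
    refine ⟨C', hC'pos, fun x hx => ⟨?_, ?_⟩⟩
    · exact extPos ((iterSmooth hθ₂smooth (n + 1)).continuous.comp (continuous_pow 2))
        (by
          apply ContinuousAt.div
          · fun_prop
          · fun_prop
          · norm_num) claim2 x hx
    · exact extPos ((iterSmooth hθ₃smooth (n + 1)).continuous.comp (continuous_pow 2))
        (by
          apply ContinuousAt.div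
          · fun_prop
          · fun_prop
          · norm_num) claim3 x hx
end

section
/- For every q ≥ 1 there is a constant C = C(q) such that for all real x, y with 0 ≤ x ≤ y: e^x / (cosh(x) + (y/x)·sinh(x))^(1+1/q) ≤ C/(1+y), where at x = 0 the expression (y/x)·sinh(x) is interpreted as y. -/
/-- For every `q ≥ 1` there is `C = C(q) > 0` such that for all `0 ≤ x ≤ y`:
`e^x / (cosh(x) + (y/x)·sinh(x))^(1+1/q) ≤ C/(1+y)`, where at `x = 0` the
expression `(y/x)·sinh(x)` is interpreted as `y`. -/
theorem crucial_decay_inequality (q : ℝ) (hq : 1 ≤ q) :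
    ∃ C : ℝ, 0 < C ∧ ∀ x y : ℝ, 0 ≤ x → x ≤ y →
      Real.exp x /
        (Real.cosh x + (if x = 0 then y else y / x * Real.sinh x)) ^ (1 + 1 / q)
        ≤ C / (1 + y) := by
  have hq0 : 0 < q := lt_of_lt_of_le one_pos hq
  refine ⟨4 * q, by positivity, ?_⟩
  intro x y hx hxy
  have hy : 0 ≤ y := le_trans hx hxy
  have hx1 : (0:ℝ) < 1 + x := by linarith
  set s : ℝ := (if x = 0 then y else y / x * Real.sinh x) with hs
  set B : ℝ := Real.exp x * (1 + x + y) / (2 * (1 + x)) with hB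
  have hex : (0:ℝ) < Real.exp x := Real.exp_pos x
  have hBpos : 0 < B := by positivity
  -- s ≥ y * exp x / (2*(1+x))
  have hslow : y * Real.exp x / (2 * (1 + x)) ≤ s := by
    by_cases h0 : x = 0
    · simp [hs, h0]
      nlinarith [Real.exp_pos (0:ℝ)]
    · have hxpos : 0 < x := lt_of_le_of_ne hx (Ne.symm h0)
      rw [hs, if_neg h0]
      rw [div_le_iff₀ (by positivity)]
      have heq : y / x * Real.sinh x * (2 * (1 + x))
          = y * (2 * (1 + x) * Real.sinh x) / x := by ring
      rw [heq, le_div_iff₀ hxpos]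
      have hsinh : x * Real.exp x ≤ 2 * (1 + x) * Real.sinh x := by
        rw [Real.sinh_eq]
        have h1 : 1 + 2*x ≤ Real.exp (2*x) := by
          have := Real.add_one_le_exp (2*x)
          linarith
        have h2 : Real.exp x * Real.exp x = Real.exp (2*x) := by
          rw [← Real.exp_add]; ring_nf
        have h3 : Real.exp x * Real.exp (-x) = 1 := by
          rw [← Real.exp_add]; simp
        have h4 : 0 < Real.exp (-x) := Real.exp_pos _
        nlinarith [Real.exp_pos x]
      nlinarith
  have hcosh : Real.exp x / 2 ≤ Real.cosh x := by
    rw [Real.cosh_eq]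
    have := (Real.exp_pos (-x)).le
    linarith
  have hDB : B ≤ Real.cosh x + s := by
    have : B ≤ Real.exp x / 2 + y * Real.exp x / (2 * (1 + x)) := by
      rw [hB, div_add_div _ _ (by norm_num) (by positivity)]
      rw [div_le_div_iff₀ (by positivity) (by positivity)]
      ring_nf
      nlinarith
    linarith
  have hDpos : 0 < Real.cosh x + s := lt_of_lt_of_le hBpos hDB
  have hq' : (0:ℝ) < 1/q := by positivity
  have hql : 1/q ≤ 1 := by rw [div_le_one hq0]; exact hq
  -- B^(1/q) ≥ (1+x)/(2q)
  have hBq : (1 + x) / (2 * q) ≤ B ^ (1/q : ℝ) := by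
    have h1 : Real.exp x / 2 ≤ B := by
      rw [hB, div_le_div_iff₀ (by norm_num) (by positivity)]
      nlinarith
    have h2 : (Real.exp x / 2 : ℝ) ^ (1/q : ℝ) ≤ B ^ (1/q : ℝ) :=
      Real.rpow_le_rpow (by positivity) h1 hq'.le
    have h3 : (Real.exp x / 2 : ℝ) ^ (1/q : ℝ)
        = Real.exp (x / q) / (2:ℝ) ^ (1/q : ℝ) := by
      rw [Real.div_rpow hex.le (by norm_num)]
      congr 1
      rw [Real.rpow_def_of_pos hex, Real.log_exp]
      ring_nf
    have h4 : (2:ℝ) ^ (1/q : ℝ) ≤ 2 := by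
      calc (2:ℝ) ^ (1/q : ℝ) ≤ (2:ℝ) ^ (1:ℝ) :=
            Real.rpow_le_rpow_of_exponent_le (by norm_num) hql
        _ = 2 := Real.rpow_one 2
      
    have h5 : Real.exp (x/q) / 2 ≤ Real.exp (x/q) / (2:ℝ) ^ (1/q : ℝ) := by
      apply div_le_div_of_nonneg_left (Real.exp_pos _).le (by positivity) h4
    have h6 : (1 + x) / (2 * q) ≤ Real.exp (x/q) / 2 := by
      have hexp1 : 1 + x/q ≤ Real.exp (x/q) := by
        have := Real.add_one_le_exp (x/q); linarith
      rw [div_le_div_iff₀ (by positivity) (by norm_num)]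
      have hxq : x ≤ q * (x/q) := by field_simp; rfl
      nlinarith
    linarith [h3 ▸ h2]
  -- D^(1+1/q) ≥ B * B^(1/q)
  have hpow : B * B ^ (1/q : ℝ) ≤ (Real.cosh x + s) ^ (1 + 1/q : ℝ) := by
    have h1 : B ^ (1 + 1/q : ℝ) ≤ (Real.cosh x + s) ^ (1 + 1/q : ℝ) :=
      Real.rpow_le_rpow hBpos.le hDB (by positivity)
    have h2 : B ^ (1 + 1/q : ℝ) = B * B ^ (1/q : ℝ) := by
      rw [Real.rpow_add hBpos, Real.rpow_one]
    linarith [h2 ▸ h1]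
  have hDp : 0 < (Real.cosh x + s) ^ (1 + 1/q : ℝ) := Real.rpow_pos_of_pos hDpos _
  rw [div_le_div_iff₀ hDp (by linarith : (0:ℝ) < 1 + y)]
  -- exp x * (1+y) ≤ 4q * D^(1+1/q)
  have key : Real.exp x * (1 + y) ≤ 4 * q * (B * ((1 + x) / (2 * q))) := by
    rw [hB]
    have : 4 * q * (Real.exp x * (1 + x + y) / (2 * (1 + x)) * ((1 + x) / (2 * q)))
        = Real.exp x * (1 + x + y) := by field_simp; ring
    rw [this]
    nlinarith
  have hmul : B * ((1 + x) / (2 * q)) ≤ B * B ^ (1/q : ℝ) :=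
    mul_le_mul_of_nonneg_left hBq hBpos.le
  nlinarith [Real.rpow_pos_of_pos hDpos (1 + 1/q : ℝ)]
end
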